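/- Let P be a consensus matrix with invariant measure π, and let C_{P*P} = nPᵀΠP. Then R̄(C_{P*P}) ≤ (1/(n π_min p_min²)) R̄(G(P)), where R̄ denotes average effective resistance, G(P) is the undirected graph of P with unit conductances, and p_min is the minimum nonzero entry of P. -/

import Mathlib

open Matrix

/-- A consensus matrix: entrywise nonnegative, row-stochastic, irreducible
(for every pair of indices some power has a positive entry), with positive diagonal. -/
def IsConsensus {n : ℕ} (P : Matrix (Fin n) (Fin n) ℝ) : Prop :=
  (∀ i j, 0 ≤ P i j) ∧ (∀ i, (∑ j, P i j) = 1) ∧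
  (∀ i j, ∃ k : ℕ, 0 < (P ^ k) i j) ∧ (∀ i, 0 < P i i)

/-- `mu` is the invariant measure of `P`: strictly positive, sums to `1`,
and is a left fixed vector of `P`. -/
def IsInvMeasure {n : ℕ} (P : Matrix (Fin n) (Fin n) ℝ) (mu : Fin n → ℝ) : Prop :=
  (∀ i, 0 < mu i) ∧ (∑ i, mu i) = 1 ∧ (∀ j, (∑ i, mu i * P i j) = mu j)

/-- The time reversal `P* = Π⁻¹ Pᵀ Π` with `Π = diag(mu)`. -/
noncomputable def Pstar {n : ℕ} (P : Matrix (Fin n) (Fin n) ℝ) (mu : Fin n → ℝ) :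
    Matrix (Fin n) (Fin n) ℝ :=
  Matrix.diagonal (fun i => (mu i)⁻¹) * Pᵀ * Matrix.diagonal mu

/-- The graph Laplacian `L(C) = diag(C 𝟙) − C`. -/
def lap {n : ℕ} (C : Matrix (Fin n) (Fin n) ℝ) : Matrix (Fin n) (Fin n) ℝ :=
  Matrix.diagonal (fun i => ∑ j, C i j) - C

/-- A conductance matrix: symmetric, entrywise nonnegative, irreducible. -/
def IsConductance {n : ℕ} (C : Matrix (Fin n) (Fin n) ℝ) : Prop :=
  Cᵀ = C ∧ (∀ i j, 0 ≤ C i j) ∧ (∀ i j, ∃ k : ℕ, 0 < (C ^ k) i j)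

/-- The effective resistance between `a` and `b`: `v a - v b` for a solution `v`
of `L(C) v = e_a - e_b` (junk value `0` if no solution exists). -/
noncomputable def effRes {n : ℕ} (C : Matrix (Fin n) (Fin n) ℝ) (a b : Fin n) : ℝ :=
  open Classical in
  if h : ∃ v : Fin n → ℝ, lap C *ᵥ v = Pi.single a 1 - Pi.single b 1 then
    h.choose a - h.choose b
  else 0

/-- The average effective resistance `(1/(2 n²)) Σ_{u,v} R_{uv}(C)`. -/
noncomputable def avgRes {n : ℕ} (C : Matrix (Fin n) (Fin n) ℝ) : ℝ :=
  (1 / (2 * (n : ℝ) ^ 2)) * ∑ u, ∑ v, effRes C u v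

/-- The unit-conductance matrix of the undirected graph associated with `P`:
edge `{u,v}` iff `P u v ≠ 0` or `P v u ≠ 0`. -/
noncomputable def adjMat {n : ℕ} (P : Matrix (Fin n) (Fin n) ℝ) : Matrix (Fin n) (Fin n) ℝ :=
  Matrix.of fun i j => if i ≠ j ∧ (P i j ≠ 0 ∨ P j i ≠ 0) then (1 : ℝ) else 0

/-- The LQ cost `J(P) = (1/n) Σ_{t≥0} ‖P^t − 𝟙 muᵀ‖_F²`. -/
noncomputable def LQcost {n : ℕ} (P : Matrix (Fin n) (Fin n) ℝ) (mu : Fin n → ℝ) : ℝ :=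
  (1 / (n : ℝ)) *
    ∑' t : ℕ, ∑ i, ∑ j,
      ((P ^ t - Matrix.vecMulVec (fun _ => 1) mu : Matrix (Fin n) (Fin n) ℝ) i j) ^ 2

/-- The weighted LQ cost `J_w(P)`. -/
noncomputable def LQcostW {n : ℕ} (P : Matrix (Fin n) (Fin n) ℝ) (mu : Fin n → ℝ) : ℝ :=
  ∑' t : ℕ, Matrix.trace ((1 - Matrix.vecMulVec mu (fun _ => 1)) * Pᵀ ^ t *
    Matrix.diagonal mu * P ^ t * (1 - Matrix.vecMulVec (fun _ => 1) mu))

/-- The Green matrix `G(P) = Σ_{t≥0} (P^t − 𝟙 muᵀ)`. -/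
noncomputable def Green {n : ℕ} (P : Matrix (Fin n) (Fin n) ℝ) (mu : Fin n → ℝ) :
    Matrix (Fin n) (Fin n) ℝ :=
  ∑' t : ℕ, (P ^ t - Matrix.vecMulVec (fun _ => 1) mu)

/-- Out-degree (excluding self-loops) of node `i` in the directed graph of `P`. -/
noncomputable def outDeg {n : ℕ} (P : Matrix (Fin n) (Fin n) ℝ) (i : Fin n) : ℕ :=
  (Finset.univ.filter fun j => j ≠ i ∧ P i j ≠ 0).card

/-- In-degree (excluding self-loops) of node `j` in the directed graph of `P`. -/
noncomputable def inDeg {n : ℕ} (P : Matrix (Fin n) (Fin n) ℝ) (j : Fin n) : ℕ :=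
  (Finset.univ.filter fun i => i ≠ j ∧ P i j ≠ 0).card

/-!
Every edge of `G(P)` is an edge of `C = n Pᵀ Π P`, with conductance at least
`c = n π_min p_min²`: if `P i j ≠ 0` then `C i j ≥ n P i i π i P i j`, and symmetrically through
row `j`, the positive diagonal of `P` supplying the second factor. So `C ≥ c · adj(P)` entrywise,
and by Rayleigh monotonicity each effective resistance of `C` is at most `1/c` times that of
`G(P)`; averaging over all pairs gives the bound. The resistances of `G(P)` are well defined
because irreducibility of `P` makes `G(P)` connected, so the kernel of its Laplacian is the
constants and every `e_a - e_b` lies in its range.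
-/

theorem Matrix.exists_mulVec_eq_of_orthogonal_ker {ι : Type*} [Fintype ι] [DecidableEq ι]
    {L : Matrix ι ι ℝ} (hL : Lᵀ = L) {f : ι → ℝ} (hf : ∀ y, L *ᵥ y = 0 → f ⬝ᵥ y = 0) :
    ∃ v, L *ᵥ v = f := by
  set T := L.toEuclideanLin
  have hT : T.IsSymmetric :=
    Matrix.isSymmetric_toEuclideanLin_iff.mpr (by simpa [IsHermitian] using hL)
  have hmem : WithLp.toLp 2 f ∈ LinearMap.range T := by
    rw [← Submodule.orthogonal_orthogonal (LinearMap.range T), hT.orthogonal_range,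
      Submodule.mem_orthogonal']
    intro y hy
    have := hf y.ofLp (by simpa [T] using congrArg WithLp.ofLp (LinearMap.mem_ker.mp hy))
    simpa [EuclideanSpace.inner_eq_star_dotProduct, dotProduct_comm] using this
  obtain ⟨v, hv⟩ := hmem
  exact ⟨v.ofLp, by simpa [T] using congrArg WithLp.ofLp hv⟩

lemma Matrix.eq_of_pow_apply_ne_zero {ι R α : Type*} [Fintype ι] [DecidableEq ι] [Semiring R]
    {P : Matrix ι ι R} {x : ι → α} (hx : ∀ i j, P i j ≠ 0 → x i = x j) :
    ∀ (k : ℕ) {i j : ι}, (P ^ k) i j ≠ 0 → x i = x j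
  | 0, i, j, h => by
    by_cases hij : i = j
    · rw [hij]
    · exact absurd (one_apply_ne hij) h
  | k + 1, i, j, h => by
    rw [pow_succ, mul_apply] at h
    obtain ⟨m, -, hm⟩ := Finset.exists_ne_zero_of_sum_ne_zero h
    exact (eq_of_pow_apply_ne_zero hx k (left_ne_zero_of_mul hm)).trans
      (hx m j (right_ne_zero_of_mul hm))

lemma Matrix.transpose_mul_diagonal_mul_apply {ι R : Type*} [Fintype ι] [DecidableEq ι]
    [CommSemiring R] (P : Matrix ι ι R) (d : ι → R) (i j : ι) :
    (Pᵀ * diagonal d * P) i j = ∑ w, P w i * d w * P w j := by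
  rw [mul_apply]
  simp only [mul_diagonal, transpose_apply]

section Laplacian

variable {n : ℕ}

lemma lap_transpose {C : Matrix (Fin n) (Fin n) ℝ} (hC : Cᵀ = C) : (lap C)ᵀ = lap C := by
  simp [lap, hC]

lemma lap_sub_smul (C D : Matrix (Fin n) (Fin n) ℝ) (c : ℝ) :
    lap (C - c • D) = lap C - c • lap D := by
  ext i j
  by_cases h : i = j <;>
    simp [lap, h, Finset.sum_sub_distrib, Finset.mul_sum, mul_sub] <;> ring

lemma dotProduct_lap_mulVec_self {C : Matrix (Fin n) (Fin n) ℝ} (hC : Cᵀ = C) (x : Fin n → ℝ) :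
    x ⬝ᵥ (lap C *ᵥ x) = (1 / 2) * ∑ i, ∑ j, C i j * (x i - x j) ^ 2 := by
  have hsymm : ∑ i, ∑ j, C i j * x j ^ 2 = ∑ i, ∑ j, C i j * x i ^ 2 := by
    have hC' : ∀ i j, C j i = C i j := fun i j => congrFun (congrFun hC i) j
    rw [Finset.sum_comm]
    simp_rw [hC']
  have hlhs : x ⬝ᵥ (lap C *ᵥ x) = ∑ i, ∑ j, C i j * x i ^ 2 - ∑ i, ∑ j, C i j * x i * x j := by
    rw [lap, sub_mulVec, dotProduct_sub]
    congr 1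
    · simp only [mulVec_diagonal, dotProduct, Finset.sum_mul, Finset.mul_sum]
      exact Finset.sum_congr rfl fun i _ => Finset.sum_congr rfl fun j _ => by ring
    · simp only [mulVec, dotProduct, Finset.mul_sum]
      exact Finset.sum_congr rfl fun i _ => Finset.sum_congr rfl fun j _ => by ring
  have hrhs : ∑ i, ∑ j, C i j * (x i - x j) ^ 2 = ∑ i, ∑ j, C i j * x i ^ 2
      - 2 * ∑ i, ∑ j, C i j * x i * x j + ∑ i, ∑ j, C i j * x j ^ 2 := by
    simp only [Finset.mul_sum, ← Finset.sum_sub_distrib, ← Finset.sum_add_distrib]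
    refine Finset.sum_congr rfl fun i _ => Finset.sum_congr rfl fun j _ => by ring
  rw [hlhs, hrhs, hsymm]
  ring

lemma dotProduct_lap_mulVec_self_nonneg {C : Matrix (Fin n) (Fin n) ℝ} (hC : Cᵀ = C)
    (hC0 : ∀ i j, 0 ≤ C i j) (x : Fin n → ℝ) : 0 ≤ x ⬝ᵥ (lap C *ᵥ x) := by
  rw [dotProduct_lap_mulVec_self hC]
  exact mul_nonneg (by norm_num) <| Finset.sum_nonneg fun i _ => Finset.sum_nonneg fun j _ =>
    mul_nonneg (hC0 i j) (sq_nonneg _)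

lemma eq_of_dotProduct_lap_mulVec_self_eq_zero {C : Matrix (Fin n) (Fin n) ℝ} (hC : Cᵀ = C)
    (hC0 : ∀ i j, 0 ≤ C i j) {x : Fin n → ℝ} (hx : x ⬝ᵥ (lap C *ᵥ x) = 0) {i j : Fin n}
    (hij : C i j ≠ 0) : x i = x j := by
  have hterm : ∀ i j, 0 ≤ C i j * (x i - x j) ^ 2 := fun i j =>
    mul_nonneg (hC0 i j) (sq_nonneg _)
  rw [dotProduct_lap_mulVec_self hC, mul_eq_zero, or_iff_right (by norm_num),
    Finset.sum_eq_zero_iff_of_nonneg fun i _ => Finset.sum_nonneg fun j _ => hterm i j] at hx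
  have := (Finset.sum_eq_zero_iff_of_nonneg fun j _ => hterm i j).mp (hx i (Finset.mem_univ _)) j
    (Finset.mem_univ _)
  rw [mul_eq_zero, or_iff_right hij, sq_eq_zero_iff, sub_eq_zero] at this
  exact this

/-- Rayleigh monotonicity. The energy `f ⬝ᵥ u` of the `C`-potential dominates `c` times its
`D`-energy, and expanding `0 ≤ E_D(v - c • u)` turns this into the claim. -/
lemma mul_dotProduct_le_of_lap_mulVec_eq {C D : Matrix (Fin n) (Fin n) ℝ} (hC : Cᵀ = C)
    (hD : Dᵀ = D) (hD0 : ∀ i j, 0 ≤ D i j) {c : ℝ} (hc : 0 ≤ c) (hle : ∀ i j, c * D i j ≤ C i j)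
    {f u v : Fin n → ℝ} (hu : lap C *ᵥ u = f) (hv : lap D *ᵥ v = f) :
    c * (f ⬝ᵥ u) ≤ f ⬝ᵥ v := by
  have hgap : c * (u ⬝ᵥ (lap D *ᵥ u)) ≤ f ⬝ᵥ u := by
    have h := dotProduct_lap_mulVec_self_nonneg (C := C - c • D)
      (by rw [transpose_sub, transpose_smul, hC, hD])
      (fun i j => by simpa using hle i j) u
    rw [lap_sub_smul, sub_mulVec, smul_mulVec, dotProduct_sub, dotProduct_smul, smul_eq_mul, hu,
      dotProduct_comm u f] at h
    linarith
  have hvu : v ⬝ᵥ (lap D *ᵥ u) = f ⬝ᵥ u := by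
    rw [dotProduct_mulVec, ← mulVec_transpose, lap_transpose hD, hv, dotProduct_comm]
  have hsq := dotProduct_lap_mulVec_self_nonneg hD hD0 (v - c • u)
  simp only [mulVec_sub, mulVec_smul, dotProduct_sub, sub_dotProduct, dotProduct_smul,
    smul_dotProduct, smul_eq_mul, hv, hvu] at hsq
  rw [dotProduct_comm v f, dotProduct_comm u f] at hsq
  nlinarith

lemma effRes_le_inv_mul_effRes {C D : Matrix (Fin n) (Fin n) ℝ} (hC : Cᵀ = C) (hD : Dᵀ = D)
    (hD0 : ∀ i j, 0 ≤ D i j) {c : ℝ} (hc : 0 < c) (hle : ∀ i j, c * D i j ≤ C i j) {a b : Fin n}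
    (hsol : ∃ v, lap D *ᵥ v = Pi.single a 1 - Pi.single b 1) :
    effRes C a b ≤ c⁻¹ * effRes D a b := by
  rw [effRes, effRes, dif_pos hsol]
  split_ifs with hsolC
  · rw [le_inv_mul_iff₀ hc]
    simpa [sub_dotProduct] using
      mul_dotProduct_le_of_lap_mulVec_eq hC hD hD0 hc.le hle hsolC.choose_spec hsol.choose_spec
  · -- no `C`-potential exists, so `effRes C a b` is the junk value `0`
    have h := dotProduct_lap_mulVec_self_nonneg hD hD0 hsol.choose
    rw [hsol.choose_spec, dotProduct_comm] at h
    simp only [sub_dotProduct, single_dotProduct, one_mul, sub_nonneg] at h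
    exact mul_nonneg (inv_nonneg.2 hc.le) (sub_nonneg.2 h)

lemma exists_lap_mulVec_eq_single_sub_single {C : Matrix (Fin n) (Fin n) ℝ} (hC : Cᵀ = C)
    (hC0 : ∀ i j, 0 ≤ C i j)
    (hconn : ∀ x : Fin n → ℝ, (∀ i j, C i j ≠ 0 → x i = x j) → ∀ i j, x i = x j) (a b : Fin n) :
    ∃ v, lap C *ᵥ v = Pi.single a 1 - Pi.single b 1 := by
  refine Matrix.exists_mulVec_eq_of_orthogonal_ker (lap_transpose hC) fun y hy => ?_
  have hconst := hconn y fun i j =>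
    eq_of_dotProduct_lap_mulVec_self_eq_zero hC hC0 (by rw [hy, dotProduct_zero])
  simp [sub_dotProduct, hconst a b]

end Laplacian

section Consensus

variable {n : ℕ}

lemma adjMat_transpose (P : Matrix (Fin n) (Fin n) ℝ) : (adjMat P)ᵀ = adjMat P := by
  ext i j
  simp only [transpose_apply, adjMat, of_apply, ne_comm (a := j), or_comm (a := P j i ≠ 0)]

lemma adjMat_nonneg (P : Matrix (Fin n) (Fin n) ℝ) (i j : Fin n) : 0 ≤ adjMat P i j := by
  simp only [adjMat, of_apply]
  split_ifs <;> norm_num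

lemma IsConsensus.eq_of_forall_adjMat_ne_zero {P : Matrix (Fin n) (Fin n) ℝ}
    (hP : IsConsensus P) {x : Fin n → ℝ} (hx : ∀ i j, adjMat P i j ≠ 0 → x i = x j)
    (i j : Fin n) : x i = x j := by
  have hedge : ∀ i j, P i j ≠ 0 → x i = x j := fun i j hij => by
    by_cases h : i = j
    · rw [h]
    · exact hx i j (by simp [adjMat, h, hij])
  obtain ⟨k, hk⟩ := hP.2.2.1 i j
  exact eq_of_pow_apply_ne_zero hedge k hk.ne'

lemma IsConsensus.mul_adjMat_le {P : Matrix (Fin n) (Fin n) ℝ} (hP : IsConsensus P)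
    {mu : Fin n → ℝ} (hmu : ∀ i, 0 ≤ mu i) {mumin pmin : ℝ} (hmumin : ∀ i, mumin ≤ mu i)
    (hmumin0 : 0 ≤ mumin) (hpmin : ∀ i j, P i j ≠ 0 → pmin ≤ P i j) (hpmin0 : 0 ≤ pmin)
    (i j : Fin n) :
    ((n : ℝ) * mumin * pmin ^ 2) * adjMat P i j ≤ ((n : ℝ) • (Pᵀ * diagonal mu * P)) i j := by
  have hterm : ∀ w, 0 ≤ P w i * mu w * P w j := fun w =>
    mul_nonneg (mul_nonneg (hP.1 w i) (hmu w)) (hP.1 w j)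
  rw [Matrix.smul_apply, smul_eq_mul, transpose_mul_diagonal_mul_apply, mul_assoc, mul_assoc]
  refine mul_le_mul_of_nonneg_left ?_ (Nat.cast_nonneg (α := ℝ) n)
  simp only [adjMat, of_apply]
  split_ifs with hij
  · -- the edge is seen in row `w = i` or `w = j`, the positive diagonal supplying `P w w`
    obtain ⟨w, hwi, hwj⟩ : ∃ w, pmin ≤ P w i ∧ pmin ≤ P w j := by
      rcases hij.2 with h | h
      · exact ⟨i, hpmin i i (hP.2.2.2 i).ne', hpmin i j h⟩
      · exact ⟨j, hpmin j i h, hpmin j j (hP.2.2.2 j).ne'⟩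
    calc mumin * (pmin ^ 2 * 1) = pmin * mumin * pmin := by ring
      _ ≤ P w i * mu w * P w j :=
        mul_le_mul (mul_le_mul hwi (hmumin w) hmumin0 (hP.1 w i)) hwj hpmin0
          (mul_nonneg (hP.1 w i) (hmu w))
      _ ≤ ∑ w, P w i * mu w * P w j :=
        Finset.single_le_sum (fun w _ => hterm w) (Finset.mem_univ w)
  · simpa using Finset.sum_nonneg fun w _ => hterm w

end Consensus

lemma avgRes_le_mul_avgRes {n : ℕ} {C D : Matrix (Fin n) (Fin n) ℝ} {k : ℝ}
    (h : ∀ a b, effRes C a b ≤ k * effRes D a b) : avgRes C ≤ k * avgRes D := by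
  rw [avgRes, avgRes, mul_left_comm]
  gcongr
  simp only [Finset.mul_sum]
  gcongr with a _ b _
  exact h a b

/-- `R̄(C_{P*P}) ≤ (1/(n mumin pmin²)) R̄(G(P))`. -/
theorem stmt17 {n : ℕ} (P : Matrix (Fin n) (Fin n) ℝ) (mu : Fin n → ℝ)
    (hP : IsConsensus P) (hmu : IsInvMeasure P mu)
    (mumin pmin : ℝ)
    (hmin : (∀ i, mumin ≤ mu i) ∧ ∃ i, mu i = mumin)
    (hpmin : (∀ i j, P i j ≠ 0 → pmin ≤ P i j) ∧ ∃ i j, P i j ≠ 0 ∧ P i j = pmin) :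
    avgRes ((n : ℝ) • (Pᵀ * Matrix.diagonal mu * P)) ≤
      (1 / ((n : ℝ) * mumin * pmin ^ 2)) * avgRes (adjMat P) := by
  obtain ⟨i₀, rfl⟩ := hmin.2
  obtain ⟨p, q, hpq, rfl⟩ := hpmin.2
  have hn : (0 : ℝ) < n := Nat.cast_pos.mpr i₀.pos
  have hc : 0 < (n : ℝ) * mu i₀ * P p q ^ 2 := by
    have := hmu.1 i₀
    have := (hP.1 p q).lt_of_ne' hpq
    positivity
  have hsymm : ((n : ℝ) • (Pᵀ * diagonal mu * P))ᵀ = (n : ℝ) • (Pᵀ * diagonal mu * P) := by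
    simp [transpose_mul, Matrix.mul_assoc]
  refine avgRes_le_mul_avgRes fun a b => ?_
  rw [one_div]
  exact effRes_le_inv_mul_effRes hsymm (adjMat_transpose P) (adjMat_nonneg P) hc
    (hP.mul_adjMat_le (fun i => (hmu.1 i).le) hmin.1 (hmu.1 i₀).le hpmin.1 (hP.1 p q))
    (exists_lap_mulVec_eq_single_sub_single (adjMat_transpose P) (adjMat_nonneg P)
      (fun _ => hP.eq_of_forall_adjMat_ne_zero) a b)
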